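/- Let m, p be positive integers, let l : Fin m → Fin p be a map, and let v ∈ ℂ^m be a nonzero vector. For g ∈ ℂ^p, let D_g denote the m×m diagonal matrix whose t-th diagonal entry is g(l(t)). Then the following are equivalent: (1) for almost every (g, h) ∈ ℂ^p × ℂ^p, the vectors D_g v and D_h v are linearly independent over ℂ; (2) there exist indices t₁, t₂ ∈ Fin m with v(t₁) ≠ 0, v(t₂) ≠ 0, and l(t₁) ≠ l(t₂), i.e., l is not constant on the support of v. -/

import Mathlib

/-! If `l` is constant on the support of `v`, every `D_g v` is a multiple of `v`, so no pair is
independent. Otherwise pick `t₁, t₂` in the support with `a = l t₁ ≠ b = l t₂`: the `2 × 2` minor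
of `(D_g v, D_h v)` at `t₁, t₂` is `v t₁ * v t₂ * (g a * h b - g b * h a)`, and by Fubini the
quadric `g a * h b = g b * h a` is null, since for `g a ≠ 0` it is a hyperplane in `h`. -/

open Matrix MeasureTheory

/-- The `m × m` diagonal matrix whose `t`-th diagonal entry is `g (l t)`. -/
def patDiag {m p : ℕ} (l : Fin m → Fin p) (g : Fin p → ℂ) :
    Matrix (Fin m) (Fin m) ℂ :=
  Matrix.diagonal (g ∘ l)

theorem LinearMap.ae_apply_ne_zero {E F : Type*} [NormedAddCommGroup E] [NormedSpace ℝ E]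
    [MeasurableSpace E] [BorelSpace E] [FiniteDimensional ℝ E] [AddCommGroup F] [Module ℝ F]
    (μ : Measure E) [μ.IsAddHaarMeasure] {φ : E →ₗ[ℝ] F} (hφ : φ ≠ 0) :
    ∀ᵐ x ∂μ, φ x ≠ 0 :=
  ae_iff.2 <| measure_mono_null (fun x hx => by simpa using hx)
    (Measure.addHaar_submodule μ _ (mt LinearMap.ker_eq_top.1 hφ))

theorem ae_mul_ne_mul {ι : Type*} [Fintype ι] {a b : ι} (hab : a ≠ b) :
    ∀ᵐ gh : (ι → ℂ) × (ι → ℂ), gh.1 a * gh.2 b ≠ gh.1 b * gh.2 a := by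
  classical
  have hmeas : MeasurableSet {gh : (ι → ℂ) × (ι → ℂ) | gh.1 a * gh.2 b ≠ gh.1 b * gh.2 a} :=
    (measurableSet_eq_fun (by fun_prop) (by fun_prop)).compl
  rw [Measure.volume_eq_prod, Measure.ae_prod_iff_ae_ae hmeas]
  have hproj_ne_zero (c : ι) : (LinearMap.proj c : (ι → ℂ) →ₗ[ℝ] ℂ) ≠ 0 := fun h => by
    simpa using LinearMap.congr_fun h (Pi.single c 1)
  filter_upwards [LinearMap.ae_apply_ne_zero volume (hproj_ne_zero a)] with g hga
  set φ : (ι → ℂ) →ₗ[ℝ] ℂ := g a • LinearMap.proj b - g b • LinearMap.proj a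
  have hφ : φ ≠ 0 := fun h => hga <| by
    simpa [φ, Pi.single_apply, hab] using LinearMap.congr_fun h (Pi.single b 1)
  filter_upwards [LinearMap.ae_apply_ne_zero volume hφ] with h hh
  simpa [φ, sub_eq_zero, mul_comm] using hh

theorem linearIndependent_pair_of_mul_ne_mul {K ι : Type*} [Field K] {x y : ι → K} {i j : ι}
    (hxy : x i * y j ≠ x j * y i) : LinearIndependent K ![x, y] := by
  have hdet : x i * y j - x j * y i ≠ 0 := sub_ne_zero.2 hxy
  refine LinearIndependent.pair_iff.2 fun s t hst => ?_
  have hi : s * x i + t * y i = 0 := by simpa using congr_fun hst i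
  have hj : s * x j + t * y j = 0 := by simpa using congr_fun hst j
  refine ⟨(mul_eq_zero.1 ?_).resolve_right hdet, (mul_eq_zero.1 ?_).resolve_right hdet⟩
  · linear_combination y j * hi - y i * hj
  · linear_combination x i * hj - x j * hi

theorem not_linearIndependent_smul_pair {K V : Type*} [Field K] [AddCommGroup V] [Module K V]
    (v : V) (c d : K) : ¬ LinearIndependent K ![c • v, d • v] := by
  intro h
  have hc : c = 0 := by
    simpa using (LinearIndependent.pair_iff.1 h d (-c)
      (by rw [smul_smul, smul_smul, mul_comm]; simp)).2
  simpa [hc] using h.ne_zero 0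

theorem patDiag_mulVec_apply {m p : ℕ} (l : Fin m → Fin p) (g : Fin p → ℂ) (v : Fin m → ℂ)
    (t : Fin m) : (patDiag l g *ᵥ v) t = g (l t) * v t := by
  simp [patDiag, mulVec_diagonal]

theorem exists_patDiag_mulVec_eq_smul {m p : ℕ} {l : Fin m → Fin p} {v : Fin m → ℂ}
    (hl : ∀ t₁ t₂, v t₁ ≠ 0 → v t₂ ≠ 0 → l t₁ = l t₂) (g : Fin p → ℂ) :
    ∃ c : ℂ, patDiag l g *ᵥ v = c • v := by
  by_cases hv : v = 0
  · exact ⟨0, by simp [hv]⟩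
  obtain ⟨t₀, ht₀⟩ := Function.ne_iff.1 hv
  refine ⟨g (l t₀), funext fun t => ?_⟩
  by_cases ht : v t = 0
  · simp [patDiag_mulVec_apply, ht]
  · simp [patDiag_mulVec_apply, hl t t₀ ht ht₀]

theorem stmt7_general (m p : ℕ)
    (l : Fin m → Fin p) (v : Fin m → ℂ) :
    (∀ᵐ gh : (Fin p → ℂ) × (Fin p → ℂ),
        LinearIndependent ℂ ![(patDiag l gh.1).mulVec v, (patDiag l gh.2).mulVec v]) ↔
      ∃ t₁ t₂ : Fin m, v t₁ ≠ 0 ∧ v t₂ ≠ 0 ∧ l t₁ ≠ l t₂ := by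
  constructor
  · intro hae
    by_contra! hl
    rw [Measure.volume_eq_prod] at hae
    obtain ⟨g, hg⟩ := (Measure.ae_ae_of_ae_prod hae).exists
    obtain ⟨h, hli⟩ := hg.exists
    obtain ⟨c, hc⟩ := exists_patDiag_mulVec_eq_smul hl g
    obtain ⟨d, hd⟩ := exists_patDiag_mulVec_eq_smul hl h
    rw [hc, hd] at hli
    exact not_linearIndependent_smul_pair v c d hli
  · rintro ⟨t₁, t₂, h₁, h₂, hl⟩
    filter_upwards [ae_mul_ne_mul hl] with gh hgh
    refine linearIndependent_pair_of_mul_ne_mul (i := t₁) (j := t₂) fun h => hgh ?_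
    simp only [patDiag_mulVec_apply] at h
    exact mul_left_cancel₀ (mul_ne_zero h₁ h₂) (by linear_combination h)

theorem stmt7 (m p : ℕ) (hm : 0 < m) (hp : 0 < p)
    (l : Fin m → Fin p) (v : Fin m → ℂ) (hv : v ≠ 0) :
    (∀ᵐ gh : (Fin p → ℂ) × (Fin p → ℂ),
        LinearIndependent ℂ ![(patDiag l gh.1).mulVec v, (patDiag l gh.2).mulVec v]) ↔
      ∃ t₁ t₂ : Fin m, v t₁ ≠ 0 ∧ v t₂ ≠ 0 ∧ l t₁ ≠ l t₂ :=
  stmt7_general m p l v
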